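/- arXiv:2308.03141 — 3 statements merged into one kernel-verified Lean document; each statement's English description precedes it below -/
import Mathlib

section
/- Let F ∈ S_{-d} be a nonzero symmetric polynomial (invariant under the S_n-action) whose support contains no monomial of the form y_k^{(d)}. Then for every pair i ≠ j in {1,...,n}, we have (x_i − x_j) ∘ F ≠ 0. -/
open MvPolynomial

noncomputable section
namespace PSI

open scoped Classical

variable (k : Type) [Field k] (n : ℕ)

/-- The contraction action of `R = k[x_1,…,x_n]` on its graded dual `S`, where `S` is
modeled by polynomials in the dual variables `y_i` (dual basis to the monomial basis);
on basis elements, `x^d ∘ y^(e) = y^(e-d)` if `d ≤ e` componentwise and `0` otherwise. -/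
def contract (f g : MvPolynomial (Fin n) k) : MvPolynomial (Fin n) k :=
  ∑ d ∈ f.support, f.coeff d • g.divMonomial d

theorem divMonomial_add (a b : MvPolynomial (Fin n) k) (s : Fin n →₀ ℕ) :
    (a + b).divMonomial s = a.divMonomial s + b.divMonomial s := by
  ext c; simp [MvPolynomial.coeff_divMonomial]

theorem divMonomial_smul (r : k) (a : MvPolynomial (Fin n) k) (s : Fin n →₀ ℕ) :
    (r • a).divMonomial s = r • a.divMonomial s := by
  ext c; simp [MvPolynomial.coeff_divMonomial]

theorem divMonomial_zero (s : Fin n →₀ ℕ) :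
    (0 : MvPolynomial (Fin n) k).divMonomial s = 0 := by
  ext c; simp [MvPolynomial.coeff_divMonomial]

theorem contract_add_right (f a b : MvPolynomial (Fin n) k) :
    contract k n f (a + b) = contract k n f a + contract k n f b := by
  simp [contract, divMonomial_add, smul_add, Finset.sum_add_distrib]

theorem contract_smul_right (f : MvPolynomial (Fin n) k) (r : k) (a : MvPolynomial (Fin n) k) :
    contract k n f (r • a) = r • contract k n f a := by
  simp only [contract, divMonomial_smul]
  rw [Finset.smul_sum]
  exact Finset.sum_congr rfl fun d _ => smul_comm _ _ _

theorem contract_zero_right (f : MvPolynomial (Fin n) k) : contract k n f 0 = 0 := by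
  simp [contract, divMonomial_zero]

/-- The degree `-d` graded piece of the Macaulay inverse system `I^⊥ ⊆ S`:
homogeneous dual polynomials of degree `d` annihilated by `I` under contraction. -/
def perpSub (I : Ideal (MvPolynomial (Fin n) k)) (d : ℕ) :
    Submodule k (MvPolynomial (Fin n) k) where
  carrier := {g | g ∈ homogeneousSubmodule (Fin n) k d ∧ ∀ f ∈ I, contract k n f g = 0}
  add_mem' := by
    rintro a b ⟨ha1, ha2⟩ ⟨hb1, hb2⟩
    exact ⟨Submodule.add_mem _ ha1 hb1, fun f hf => by
      rw [contract_add_right, ha2 f hf, hb2 f hf, add_zero]⟩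
  zero_mem' := ⟨Submodule.zero_mem _, fun f _ => contract_zero_right k n f⟩
  smul_mem' := by
    rintro c a ⟨ha1, ha2⟩
    exact ⟨Submodule.smul_mem _ c ha1, fun f hf => by
      rw [contract_smul_right, ha2 f hf, smul_zero]⟩

/-- The full Macaulay inverse system `I^⊥` as a subset of `S`. -/
def perpSet (I : Ideal (MvPolynomial (Fin n) k)) : Set (MvPolynomial (Fin n) k) :=
  {g | ∀ f ∈ I, contract k n f g = 0}


/-- Lemma `lem:xi-xj`: if `F ∈ S_{-d}` is a nonzero symmetric dual polynomial whose
support contains no `y_i^{(d)}`, then `(x_i − x_j) ∘ F ≠ 0` for all `i ≠ j`. -/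
theorem stmt13 (d : ℕ) (F : MvPolynomial (Fin n) k)
    (hhom : F ∈ homogeneousSubmodule (Fin n) k d) (hF0 : F ≠ 0)
    (hsym : ∀ σ : Equiv.Perm (Fin n), rename (⇑σ) F = F)
    (hsupp : ∀ i : Fin n, Finsupp.single i d ∉ F.support)
    (i j : Fin n) (hij : i ≠ j) :
    contract k n (X i - X j) F ≠ 0 := by
  intro hcontr
  have hsingle : (Finsupp.single i 1 : Fin n →₀ ℕ) ≠ Finsupp.single j 1 := by
    intro h
    exact hij (Finsupp.single_left_injective one_ne_zero h)
  have hsupXX : (X i - X j : MvPolynomial (Fin n) k).support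
      = {Finsupp.single i 1, Finsupp.single j 1} := by
    ext a
    simp only [MvPolynomial.mem_support_iff, coeff_sub, coeff_X', Finset.mem_insert,
      Finset.mem_singleton]
    by_cases h1 : Finsupp.single i 1 = a <;> by_cases h2 : Finsupp.single j 1 = a <;>
      simp_all [eq_comm]
  have hci : (X i - X j : MvPolynomial (Fin n) k).coeff (Finsupp.single i 1) = 1 := by
    simp [coeff_sub, coeff_X', Ne.symm hsingle]
  have hcj : (X i - X j : MvPolynomial (Fin n) k).coeff (Finsupp.single j 1) = -1 := by
    simp [coeff_sub, coeff_X', hsingle]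
  have hc : contract k n (X i - X j) F
      = F.divMonomial (Finsupp.single i 1) - F.divMonomial (Finsupp.single j 1) := by
    rw [contract, hsupXX, Finset.sum_pair hsingle, hci, hcj]
    simp [sub_eq_add_neg]
  rw [hc, sub_eq_zero] at hcontr
  have key : ∀ c : Fin n →₀ ℕ,
      F.coeff (Finsupp.single i 1 + c) = F.coeff (Finsupp.single j 1 + c) := by
    intro c
    have := congrArg (fun p => MvPolynomial.coeff c p) hcontr
    simpa [MvPolynomial.coeff_divMonomial] using this
  -- homogeneity in terms of sums over all variables
  have hdeg : ∀ e : Fin n →₀ ℕ, F.coeff e ≠ 0 → ∑ x, e x = d := by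
    intro e hne
    have h1 : (Finsupp.weight 1) e = d := hhom hne
    rw [show (1 : Fin n → ℕ) = fun _ => 1 from rfl, ← Finsupp.degree_eq_weight_one] at h1
    rw [← h1, Finsupp.degree]
    exact (Finset.sum_subset (Finset.subset_univ _)
      (fun x _ hx => Finsupp.notMem_support_iff.mp hx)).symm
  -- no support element has its full weight on coordinate i
  have conc : ∀ e : Fin n →₀ ℕ, F.coeff e ≠ 0 → e i < d := by
    intro e hne
    have hsum := hdeg e hne
    have hle : e i ≤ d := by
      rw [← hsum]
      exact Finset.single_le_sum (fun _ _ => Nat.zero_le _) (Finset.mem_univ i)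
    rcases lt_or_eq_of_le hle with h | h
    · exact h
    · exfalso
      have hes : e = Finsupp.single i d := by
        ext l
        rcases eq_or_ne l i with rfl | hl
        · simp [h]
        · have hle2 : e i + e l ≤ ∑ x, e x := by
            rw [← Finset.sum_pair (Ne.symm hl)]
            exact Finset.sum_le_sum_of_subset (Finset.subset_univ _)
          rw [hsum, h] at hle2
          have : e l = 0 := by omega
          simp [this, Finsupp.single_apply, Ne.symm hl]
      exact hsupp i (hes ▸ MvPolynomial.mem_support_iff.mpr hne)
  -- main induction: push weight onto coordinate i
  have main : ∀ m : ℕ, ∀ e : Fin n →₀ ℕ, F.coeff e ≠ 0 → d - e i ≤ m → False := by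
    intro m
    induction m with
    | zero =>
      intro e hne hle
      have := conc e hne
      omega
    | succ m ih =>
      intro e hne hle
      have hei : e i < d := conc e hne
      have hsum := hdeg e hne
      -- find l ≠ i with e l ≠ 0
      have hex : ∃ l, l ≠ i ∧ e l ≠ 0 := by
        by_contra h
        push_neg at h
        have : ∑ x, e x = e i := Finset.sum_eq_single i
          (fun b _ hb => h b hb) (fun hb => absurd (Finset.mem_univ i) hb)
        omega
      obtain ⟨l, hli, hl0⟩ := hex
      -- produce e' with coeff ≠ 0, e' i = e i, e' j ≥ 1
      have step : ∃ e' : Fin n →₀ ℕ, F.coeff e' ≠ 0 ∧ e' i = e i ∧ 1 ≤ e' j := by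
        rcases eq_or_ne l j with rfl | hlj
        · exact ⟨e, hne, rfl, Nat.one_le_iff_ne_zero.mpr hl0⟩
        · refine ⟨Finsupp.mapDomain (Equiv.swap l j) e, ?_, ?_, ?_⟩
          · rw [← hsym (Equiv.swap l j),
              coeff_rename_mapDomain _ (Equiv.injective _)]
            exact hne
          · have hi : (Equiv.swap l j) i = i :=
              Equiv.swap_apply_of_ne_of_ne (Ne.symm hli) hij
            conv_lhs => rw [← hi]
            rw [Finsupp.mapDomain_apply (Equiv.injective _)]
          · have hj : (Equiv.swap l j) l = j := Equiv.swap_apply_left l j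
            have h2 : (Finsupp.mapDomain (⇑(Equiv.swap l j)) e) ((Equiv.swap l j) l) = e l :=
              Finsupp.mapDomain_apply (Equiv.injective _) e l
            rw [hj] at h2
            rw [h2]
            exact Nat.one_le_iff_ne_zero.mpr hl0
      obtain ⟨e', hne', hei', hej'⟩ := step
      -- shift one unit from j to i
      have hle' : Finsupp.single j 1 ≤ e' := Finsupp.single_le_iff.mpr hej'
      set c : Fin n →₀ ℕ := e' - Finsupp.single j 1 with hcdef
      have hre : Finsupp.single j 1 + c = e' := add_tsub_cancel_of_le hle'
      have hne'' : F.coeff (Finsupp.single i 1 + c) ≠ 0 := by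
        rw [key c, hre]; exact hne'
      have hval : (Finsupp.single i 1 + c : Fin n →₀ ℕ) i = e i + 1 := by
        have hc_i : c i = e' i := by
          simp [hcdef, Finsupp.tsub_apply, Finsupp.single_apply, Ne.symm hij]
        rw [Finsupp.add_apply, Finsupp.single_apply, if_pos rfl, hc_i, hei']
        omega
      exact ih _ hne'' (by rw [hval]; omega)
  obtain ⟨e, hne⟩ := MvPolynomial.ne_zero_iff.mp hF0
  exact main d e hne (Nat.sub_le _ _)

end PSI
end
end

section
/- Let W ⊆ S_{-d} be the span of the monomial symmetric polynomials m_λ for λ ⊢ d, λ ≠ (d), and let L_W ⊆ R_1^{⊕(P(d)−1)} be the kernel of ψ: (ℓ_λ)_λ ↦ Σ_λ ℓ_λ ∘ m_λ. Then every element of L_W lies in ((Σ_{i=1}^n x_i)·k)^{⊕(P(d)−1)}; that is, each component of any linear relation is a scalar multiple of x_1 + ... + x_n. In particular, L_W is a trivial S_n-representation. -/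
open MvPolynomial

noncomputable section
namespace PSI

open scoped Classical

variable (k : Type) [Field k] (n : ℕ)

/-- The principal symmetric ideal `(f)_{S_n}` generated by the orbit of `f` under the
symmetric group permuting the variables. -/
def psi (f : MvPolynomial (Fin n) k) : Ideal (MvPolynomial (Fin n) k) :=
  Ideal.span {g | ∃ σ : Equiv.Perm (Fin n), g = rename σ f}

/-- Index type for the coordinates on the parameter space of degree-`d` forms:
exponent vectors of total degree `d`. -/
def DegMon (d : ℕ) : Type := {m : Fin n →₀ ℕ // (m.sum fun _ e => e) = d}

/-- "A general principal symmetric ideal generated in degree `d` satisfies `P`":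
there is a nonzero polynomial `h` in the coefficients (i.e. a nonempty Zariski-open
subset of the parameter space `P^{N-1}`) such that `(f)_{S_n}` satisfies `P` whenever
the coefficient vector of the degree-`d` form `f` does not lie on the hypersurface `h = 0`. -/
def GeneralPSI (d : ℕ) (P : Ideal (MvPolynomial (Fin n) k) → Prop) : Prop :=
  ∃ h : MvPolynomial (DegMon n d) k, h ≠ 0 ∧
    ∀ f ∈ homogeneousSubmodule (Fin n) k d,
      eval (fun m => coeff m.1 f) h ≠ 0 → P (psi k n f)

/-- `P(d)`, the number of partitions of `d`. -/
def Pnum (d : ℕ) : ℕ := Fintype.card (Nat.Partition d)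

/-- total degree (weight) of an exponent vector. -/
def wt (m : Fin n →₀ ℕ) : ℕ := m.sum fun _ e => e

/-- The type of a monomial: the multiset of its nonzero exponents (a partition of its degree). -/
def typeOf (m : Fin n →₀ ℕ) : Multiset ℕ := m.support.val.map m

/-- The finite set of exponent vectors of total degree `d`. -/
def expFinset (d : ℕ) : Finset (Fin n →₀ ℕ) :=
  ((Finset.univ : Finset (Fin n → Fin (d + 1))).image
    (fun v => Finsupp.equivFunOnFinite.symm fun i => (v i : ℕ))).filter
      (fun e => wt n e = d)

/-- The monomial symmetric polynomial `m_λ` (of degree `d = λ.sum`): the sum of all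
monomials of type `λ`. -/
def msym (d : ℕ) (lam : Multiset ℕ) : MvPolynomial (Fin n) k :=
  ∑ e ∈ (expFinset n d).filter (fun e => typeOf n e = lam), monomial e 1

-- ===== auxiliary lemmas =====

lemma typeOf_eq (m : Fin n →₀ ℕ) :
    typeOf n m = ((Finset.univ : Finset (Fin n)).val.map m).filter (· ≠ 0) := by
  unfold typeOf
  have hs : m.support = Finset.univ.filter (fun i => m i ≠ 0) := by
    ext i; simp [Finsupp.mem_support_iff]
  rw [hs, Finset.filter_val, Multiset.filter_map]
  rfl

lemma wt_eq_sum_univ (m : Fin n →₀ ℕ) : wt n m = ∑ i, m i := by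
  unfold wt
  rw [Finsupp.sum_fintype]
  intro i; rfl

lemma wt_add (m₁ m₂ : Fin n →₀ ℕ) : wt n (m₁ + m₂) = wt n m₁ + wt n m₂ := by
  simp [wt_eq_sum_univ, Finset.sum_add_distrib]

lemma typeOf_sum (m : Fin n →₀ ℕ) : (typeOf n m).sum = wt n m := by
  unfold typeOf wt
  rw [Finsupp.sum]
  rfl

lemma mem_expFinset (e : Fin n →₀ ℕ) (d : ℕ) (h : wt n e = d) : e ∈ expFinset n d := by
  unfold expFinset
  rw [Finset.mem_filter]
  refine ⟨?_, h⟩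
  rw [Finset.mem_image]
  have hle : ∀ i, e i ≤ d := by
    intro i
    rw [← h, wt_eq_sum_univ]
    exact Finset.single_le_sum (f := fun j => e j) (fun _ _ => Nat.zero_le _)
      (Finset.mem_univ i)
  refine ⟨fun i => ⟨e i, Nat.lt_succ_of_le (hle i)⟩, Finset.mem_univ _, ?_⟩
  ext i
  simp

lemma coeff_msym (d : ℕ) (μ : Multiset ℕ) (e : Fin n →₀ ℕ) (he : wt n e = d) :
    coeff e (msym k n d μ) = if typeOf n e = μ then 1 else 0 := by
  unfold msym
  rw [MvPolynomial.coeff_sum]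
  have : ∀ e' ∈ (expFinset n d).filter (fun e' => typeOf n e' = μ),
      coeff e (monomial e' (1:k)) = if e' = e then 1 else 0 := by
    intro e' _; rw [MvPolynomial.coeff_monomial]
  rw [Finset.sum_congr rfl this, Finset.sum_ite_eq' _ e (fun _ => (1:k))]
  by_cases ht : typeOf n e = μ
  · simp [Finset.mem_filter, ht, mem_expFinset n e d he]
  · simp [Finset.mem_filter, ht]

lemma degree_one_single (s : Fin n →₀ ℕ) (h : (s.sum fun _ c => c) = 1) :
    ∃ i, s = Finsupp.single i 1 := by
  classical
  have hs : s.support.Nonempty := by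
    rcases Finset.eq_empty_or_nonempty s.support with he | hne
    · exfalso
      have : s = 0 := Finsupp.support_eq_empty.mp he
      rw [this] at h; simp at h
    · exact hne
  obtain ⟨i, hi⟩ := hs
  refine ⟨i, ?_⟩
  have hle : s i ≤ 1 := by
    rw [← h, Finsupp.sum]
    exact Finset.single_le_sum (f := fun j => s j) (fun _ _ => Nat.zero_le _) hi
  have hpos : 1 ≤ s i := Nat.one_le_iff_ne_zero.mpr (Finsupp.mem_support_iff.mp hi)
  have hsi : s i = 1 := le_antisymm hle hpos
  ext j
  by_cases hj : j = i
  · subst hj; simp [hsi]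
  · simp only [Finsupp.single_apply]
    rw [if_neg (fun hh => hj hh.symm)]
    by_contra hne
    have hjs : j ∈ s.support := Finsupp.mem_support_iff.mpr hne
    have : 2 ≤ s.sum fun _ c => c := by
      rw [Finsupp.sum]
      calc 2 = s i + 1 := by rw [hsi]
      _ ≤ s i + s j := by
        have := Nat.one_le_iff_ne_zero.mpr hne; omega
      _ ≤ ∑ a ∈ s.support, s a := by
        rw [← Finset.sum_pair (fun hh : i = j => hj hh.symm)]
        exact Finset.sum_le_sum_of_subset (by
          intro x hx
          rcases Finset.mem_insert.mp hx with rfl | hx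
          · exact hi
          · rwa [Finset.mem_singleton.mp hx])
    omega

lemma coeff_contract_homog (ℓ g : MvPolynomial (Fin n) k)
    (hl : ℓ ∈ homogeneousSubmodule (Fin n) k 1) (f : Fin n →₀ ℕ) :
    coeff f (contract k n ℓ g) =
      ∑ i : Fin n, coeff (Finsupp.single i 1) ℓ * coeff (Finsupp.single i 1 + f) g := by
  unfold contract
  rw [MvPolynomial.coeff_sum]
  have step1 : ∀ s ∈ ℓ.support,
      coeff f (ℓ.coeff s • g.divMonomial s) = ℓ.coeff s * coeff (s + f) g := by
    intro s _
    rw [MvPolynomial.coeff_smul, smul_eq_mul, MvPolynomial.coeff_divMonomial]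
  rw [Finset.sum_congr rfl step1]
  have hsub : ℓ.support ⊆ Finset.univ.image (fun i => Finsupp.single i (1:ℕ)) := by
    intro s hs
    have hco : coeff s ℓ ≠ 0 := Finsupp.mem_support_iff.mp hs
    have hdeg : (Finsupp.weight 1) s = 1 := hl hco
    have hsum : (s.sum fun _ c => c) = 1 := by
      rw [← hdeg, Finsupp.weight_apply]
      simp [Finsupp.sum]
    obtain ⟨i, rfl⟩ := degree_one_single n s hsum
    exact Finset.mem_image.mpr ⟨i, Finset.mem_univ i, rfl⟩
  rw [Finset.sum_subset hsub (by
    intro s _ hns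
    rw [MvPolynomial.notMem_support_iff.mp hns, zero_mul])]
  rw [Finset.sum_image (by
    intro i _ j _ hij
    exact Finsupp.single_left_injective (one_ne_zero) hij)]

lemma typeOf_equivMapDomain (σ : Equiv.Perm (Fin n)) (m : Fin n →₀ ℕ) :
    typeOf n (m.equivMapDomain σ) = typeOf n m := by
  rw [typeOf_eq, typeOf_eq]
  congr 1
  have h1 : ∀ i : Fin n, (m.equivMapDomain σ) i = m (σ.symm i) := fun i => rfl
  calc (Finset.univ.val.map fun i => (m.equivMapDomain σ) i)
      = Finset.univ.val.map (fun i => m (σ.symm i)) := by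
        exact Multiset.map_congr rfl (fun i _ => h1 i)
    _ = (Finset.univ.val.map fun i => σ.symm i).map m := by rw [Multiset.map_map]; rfl
    _ = Finset.univ.val.map m := by
        congr 1
        have := Finset.map_univ_equiv σ.symm
        calc Finset.univ.val.map (fun i => σ.symm i)
            = (Finset.univ.map σ.symm.toEmbedding).val := rfl
          _ = Finset.univ.val := by rw [this]

lemma wt_equivMapDomain (σ : Equiv.Perm (Fin n)) (m : Fin n →₀ ℕ) :
    wt n (m.equivMapDomain σ) = wt n m := by
  rw [← typeOf_sum, ← typeOf_sum, typeOf_equivMapDomain]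

lemma equivMapDomain_add (σ : Equiv.Perm (Fin n)) (m₁ m₂ : Fin n →₀ ℕ) :
    (m₁ + m₂).equivMapDomain σ = m₁.equivMapDomain σ + m₂.equivMapDomain σ := by
  ext i; rfl

/-- The key swap identity. -/
lemma swap_step (d : ℕ) (C : Multiset ℕ → Fin n → k) (a b : Fin n) (hab : a ≠ b)
    (heq : ∀ f : Fin n →₀ ℕ, wt n f = d - 1 →
      ∑ i, C (typeOf n (Finsupp.single i 1 + f)) i = 0)
    (f : Fin n →₀ ℕ) (hf : wt n f = d - 1) :
    C (typeOf n (Finsupp.single a 1 + f)) a - C (typeOf n (Finsupp.single a 1 + f)) b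
      = C (typeOf n (Finsupp.single b 1 + f)) a - C (typeOf n (Finsupp.single b 1 + f)) b := by
  set σ := Equiv.swap a b with hσ
  have h1 := heq f hf
  have h2 := heq (f.equivMapDomain σ) (by rw [wt_equivMapDomain, hf])
  have key : ∀ i : Fin n, typeOf n (Finsupp.single i 1 + f.equivMapDomain σ)
      = typeOf n (Finsupp.single (σ i) 1 + f) := by
    intro i
    have : Finsupp.single i 1 + f.equivMapDomain σ
        = (Finsupp.single (σ i) 1 + f).equivMapDomain σ.symm := by
      rw [equivMapDomain_add]
      congr 1
      · rw [Finsupp.equivMapDomain_single]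
        congr 1
        exact (Equiv.symm_apply_apply σ i).symm
    rw [this, typeOf_equivMapDomain]
  have h2' : ∑ i, C (typeOf n (Finsupp.single (σ i) 1 + f)) i = 0 := by
    rw [← h2]; exact Finset.sum_congr rfl (fun i _ => by rw [key i])
  have hdiff : ∑ i, (C (typeOf n (Finsupp.single i 1 + f)) i
      - C (typeOf n (Finsupp.single (σ i) 1 + f)) i) = 0 := by
    rw [Finset.sum_sub_distrib, h1, h2', sub_zero]
  have hzero : ∀ i ∈ Finset.univ, i ∉ ({a, b} : Finset (Fin n)) →
      (C (typeOf n (Finsupp.single i 1 + f)) i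
        - C (typeOf n (Finsupp.single (σ i) 1 + f)) i) = 0 := by
    intro i _ hi
    simp only [Finset.mem_insert, Finset.mem_singleton] at hi
    push_neg at hi
    rw [hσ, Equiv.swap_apply_of_ne_of_ne hi.1 hi.2, sub_self]
  have := (Finset.sum_subset (Finset.subset_univ ({a,b} : Finset (Fin n)))
    (fun i hi hni => hzero i hi hni)).symm
  rw [hdiff] at this
  rw [Finset.sum_pair hab] at this
  rw [hσ] at this
  rw [Equiv.swap_apply_left, Equiv.swap_apply_right] at this
  -- this : (C τa a - C τb a) + (C τb b - C τa b) = 0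
  linear_combination -this

lemma exists_gadget (a b : Fin n) (hab : a ≠ b) (ρ : Multiset ℕ) (hρ : ∀ x ∈ ρ, x ≠ 0)
    (hcard : ρ.card + 2 ≤ n) :
    ∃ g : Fin n →₀ ℕ, wt n g = ρ.sum ∧
      ∀ va vb : ℕ, typeOf n (Finsupp.single a va + (Finsupp.single b vb + g))
          = (va ::ₘ vb ::ₘ ρ).filter (· ≠ 0) := by
  classical
  set S : Finset (Fin n) := Finset.univ \ {a, b} with hS
  have hScard : ρ.card ≤ S.card := by
    rw [hS, Finset.card_sdiff_of_subset (Finset.subset_univ _), Finset.card_univ, Fintype.card_fin,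
      Finset.card_pair hab]
    omega
  obtain ⟨T, hTS, hTcard⟩ := Finset.exists_subset_card_eq hScard
  have haT : a ∉ T := fun h => by
    have := hTS h; rw [hS, Finset.mem_sdiff] at this; simp at this
  have hbT : b ∉ T := fun h => by
    have := hTS h; rw [hS, Finset.mem_sdiff] at this; simp at this
  set L : List ℕ := ρ.toList with hL
  have hLlen : T.card = L.length := by rw [hTcard, hL, Multiset.length_toList]
  set e : {x // x ∈ T} ≃ Fin L.length := T.equivFin.trans (finCongr hLlen) with he
  set G : Fin n → ℕ := fun i => if h : i ∈ T then L.get (e ⟨i, h⟩) else 0 with hG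
  set g : Fin n →₀ ℕ := Finsupp.equivFunOnFinite.symm G with hg
  have hgi : ∀ i, g i = G i := fun i => rfl
  have hmapT : T.val.map g = ρ := by
    have h0 : T.val.map g = T.attach.val.map (fun x => g x.1) := by
      rw [Finset.attach_val]
      conv_lhs => rw [← Multiset.attach_map_val T.val]
      rw [Multiset.map_map]
      rfl
    have h1 : T.attach.val.map (fun x => g x.1) = T.attach.val.map (fun x => L.get (e x)) := by
      apply Multiset.map_congr rfl
      intro x _
      rw [hgi, hG]
      simp only [x.2, dif_pos]
    have h2 : T.attach.val.map (fun x => L.get (e x)) = (T.attach.val.map e).map L.get := by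
      rw [Multiset.map_map]; rfl
    have h3 : T.attach.val.map e = (Finset.univ : Finset (Fin L.length)).val := by
      rw [← Finset.univ_eq_attach]
      calc (Finset.univ.val : Multiset {x // x ∈ T}).map e
          = (Finset.univ.map e.toEmbedding).val := rfl
        _ = (Finset.univ : Finset (Fin L.length)).val := by rw [Finset.map_univ_equiv]
    have h4 : ((Finset.univ : Finset (Fin L.length)).val).map L.get = (L : Multiset ℕ) := by
      rw [Fin.univ_val_map]
      congr 1
      exact List.ofFn_get L
    rw [h0, h1, h2, h3, h4, hL, Multiset.coe_toList]
  have htype : ∀ va vb : ℕ, typeOf n (Finsupp.single a va + (Finsupp.single b vb + g))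
      = (va ::ₘ vb ::ₘ ρ).filter (· ≠ 0) := by
    intro va vb
    set F : Fin n →₀ ℕ := Finsupp.single a va + (Finsupp.single b vb + g) with hF
    have hFa : F a = va := by
      rw [hF]; simp [hgi, hG, haT, Finsupp.single_apply, Ne.symm hab]
    have hFb : F b = vb := by
      rw [hF]; simp [hgi, hG, hbT, Finsupp.single_apply, hab]
    have hFT : ∀ i ∈ T, F i = G i := by
      intro i hi
      have hia : i ≠ a := fun h => haT (h ▸ hi)
      have hib : i ≠ b := fun h => hbT (h ▸ hi)
      rw [hF]
      simp [hgi, Finsupp.single_apply, Ne.symm hia, Ne.symm hib]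
    have hFout : ∀ i : Fin n, i ≠ a → i ≠ b → i ∉ T → F i = 0 := by
      intro i hia hib hiT
      rw [hF]
      simp [hgi, hG, hiT, Finsupp.single_apply, Ne.symm hia, Ne.symm hib]
    set U : Finset (Fin n) := insert a (insert b T) with hU
    have haU : a ∉ insert b T := by simp [hab, haT]
    have hUval : U.val = a ::ₘ b ::ₘ T.val := by
      rw [hU, Finset.insert_val_of_notMem haU, Finset.insert_val_of_notMem hbT]
    have hsplit : (Finset.univ : Finset (Fin n)).val = U.val + (Finset.univ \ U).val := by
      conv_lhs => rw [← Finset.union_sdiff_of_subset (Finset.subset_univ U)]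
      rw [← Finset.disjUnion_eq_union _ _ Finset.disjoint_sdiff]
      rfl
    rw [typeOf_eq, hsplit, Multiset.map_add, Multiset.filter_add, hUval]
    have hrest : (((Finset.univ \ U).val).map F).filter (· ≠ 0) = 0 := by
      rw [Multiset.filter_eq_nil]
      intro x hx
      obtain ⟨i, hi, rfl⟩ := Multiset.mem_map.mp hx
      have hiU : i ∉ U := (Finset.mem_sdiff.mp hi).2
      rw [hU] at hiU
      simp only [Finset.mem_insert] at hiU
      push_neg at hiU
      simp [hFout i hiU.1 hiU.2.1 hiU.2.2]
    rw [hrest, add_zero, Multiset.map_cons, Multiset.map_cons, hFa, hFb]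
    have : T.val.map F = ρ := by
      rw [Multiset.map_congr rfl hFT]
      have : T.val.map G = T.val.map g := Multiset.map_congr rfl (fun i _ => (hgi i).symm)
      rw [this, hmapT]
    rw [this]
  refine ⟨g, ?_, htype⟩
  have := htype 0 0
  rw [Finsupp.single_zero, Finsupp.single_zero, zero_add, zero_add] at this
  have hρf : (((0:ℕ) ::ₘ 0 ::ₘ ρ).filter (· ≠ 0)) = ρ := by
    rw [Multiset.filter_cons_of_neg _ (by simp), Multiset.filter_cons_of_neg _ (by simp),
      Multiset.filter_eq_self.mpr hρ]
  rw [← typeOf_sum, this, hρf]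

lemma multiset_card_le_sum (μ : Multiset ℕ) (h : ∀ x ∈ μ, x ≠ 0) :
    Multiset.card μ ≤ μ.sum := by
  induction μ using Multiset.induction with
  | empty => simp
  | cons x s ih =>
    simp only [Multiset.card_cons, Multiset.sum_cons]
    have hx := h x (Multiset.mem_cons_self x s)
    have := ih (fun y hy => h y (Multiset.mem_cons_of_mem hy))
    omega

lemma multiset_sum_filter_ne_zero (μ : Multiset ℕ) : (μ.filter (· ≠ 0)).sum = μ.sum := by
  induction μ using Multiset.induction with
  | empty => simp
  | cons x s ih =>
    by_cases hx : x = 0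
    · subst hx
      rw [Multiset.filter_cons_of_neg _ (by simp)]
      simp [ih]
    · rw [Multiset.filter_cons_of_pos _ (by simpa using hx)]
      simp only [Multiset.sum_cons]
      omega

lemma combinat (d : ℕ) (hd : 1 ≤ d) (hnd : d ≤ n) (C : Multiset ℕ → Fin n → k)
    (hC0 : ∀ i, C {d} i = 0)
    (heq : ∀ f : Fin n →₀ ℕ, wt n f = d - 1 →
      ∑ i, C (typeOf n (Finsupp.single i 1 + f)) i = 0)
    (a b : Fin n) (hab : a ≠ b) :
    ∀ K : ℕ, ∀ μ : Multiset ℕ, ∀ M : ℕ, M ∈ μ → (∀ x ∈ μ, x ≤ M) → (∀ x ∈ μ, x ≠ 0) →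
      μ.sum = d → d ≤ M + K → C μ a = C μ b := by
  intro K
  induction K with
  | zero =>
    intro μ M hM hMmax hpos hsum hdK
    have hMd : M ≤ d := by
      rw [← hsum]
      exact Multiset.single_le_sum (fun x _ => Nat.zero_le x) M hM
    have hMd' : M = d := by omega
    have hμ : μ = {d} := by
      have hdecomp : μ = M ::ₘ μ.erase M := (Multiset.cons_erase hM).symm
      have hzero : (μ.erase M).sum = 0 := by
        have : μ.sum = M + (μ.erase M).sum := by
          conv_lhs => rw [hdecomp]
          rw [Multiset.sum_cons]
        omega
      have herase : μ.erase M = 0 := by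
        by_cases h0 : μ.erase M = 0
        · exact h0
        · exfalso
          obtain ⟨x, hx⟩ := Multiset.exists_mem_of_ne_zero h0
          have hx0 : x ≠ 0 := hpos x (Multiset.mem_of_mem_erase hx)
          have : x ≤ (μ.erase M).sum :=
            Multiset.single_le_sum (fun y _ => Nat.zero_le y) x hx
          omega
      rw [hdecomp, herase, hMd']
      rfl
    rw [hμ, hC0, hC0]
  | succ K ih =>
    intro μ M hM hMmax hpos hsum hdK
    by_cases herase : μ.erase M = 0
    · have hμ : μ = {d} := by
        have hdecomp : μ = M ::ₘ μ.erase M := (Multiset.cons_erase hM).symm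
        have hMd : M = d := by
          rw [← hsum]
          conv_rhs => rw [hdecomp, herase]
          simp
        rw [hdecomp, herase, hMd]
        rfl
      rw [hμ, hC0, hC0]
    · obtain ⟨p, hp⟩ := Multiset.exists_mem_of_ne_zero herase
      set ρ : Multiset ℕ := (μ.erase M).erase p with hρdef
      have hdecomp : μ = p ::ₘ M ::ₘ ρ := by
        rw [hρdef]
        rw [Multiset.cons_swap]
        conv_lhs => rw [← Multiset.cons_erase hM, ← Multiset.cons_erase hp]
      have hpμ : p ∈ μ := Multiset.mem_of_mem_erase hp
      have hppos : p ≠ 0 := hpos p hpμ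
      have hMpos : M ≠ 0 := hpos M hM
      have hρpos : ∀ x ∈ ρ, x ≠ 0 := fun x hx =>
        hpos x (by rw [hdecomp]; exact Multiset.mem_cons_of_mem (Multiset.mem_cons_of_mem hx))
      have hρmax : ∀ x ∈ ρ, x ≤ M := fun x hx =>
        hMmax x (by rw [hdecomp]; exact Multiset.mem_cons_of_mem (Multiset.mem_cons_of_mem hx))
      have hpM : p ≤ M := hMmax p hpμ
      have hcardμ : Multiset.card μ = Multiset.card ρ + 2 := by
        rw [hdecomp]; simp
      have hcards : Multiset.card ρ + 2 ≤ n := by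
        have h1 : Multiset.card μ ≤ μ.sum := multiset_card_le_sum μ hpos
        omega
      have hsum' : p + (M + ρ.sum) = d := by
        rw [← hsum, hdecomp]; simp
      obtain ⟨g, hwt, htype⟩ := exists_gadget n a b hab ρ hρpos hcards
      set f : Fin n →₀ ℕ := Finsupp.single a (p - 1) + (Finsupp.single b M + g) with hf
      have hwts : ∀ (i : Fin n) (v : ℕ), wt n (Finsupp.single i v) = v := by
        intro i v
        unfold wt
        rw [Finsupp.sum_single_index rfl]
      have hwtf : wt n f = d - 1 := by
        rw [hf, wt_add, wt_add, hwts, hwts, hwt]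
        omega
      have hstep := swap_step k n d C a b hab heq f hwtf
      have htypea : typeOf n (Finsupp.single a 1 + f) = μ := by
        have h1 : Finsupp.single a 1 + f
            = Finsupp.single a p + (Finsupp.single b M + g) := by
          rw [hf, ← add_assoc, ← Finsupp.single_add]
          congr 2
          omega
        rw [h1, htype p M, hdecomp]
        rw [Multiset.filter_eq_self]
        intro x hx
        rcases Multiset.mem_cons.mp hx with rfl | hx
        · simpa using hppos
        · rcases Multiset.mem_cons.mp hx with rfl | hx
          · simpa using hMpos
          · simpa using hρpos x hx
      set μ' : Multiset ℕ := ((p - 1) ::ₘ (1 + M) ::ₘ ρ).filter (· ≠ 0) with hμ'def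
      have htypeb : typeOf n (Finsupp.single b 1 + f) = μ' := by
        have h1 : Finsupp.single b 1 + f
            = Finsupp.single a (p - 1) + (Finsupp.single b (1 + M) + g) := by
          rw [hf, add_left_comm (Finsupp.single b 1) (Finsupp.single a (p-1)),
            ← add_assoc (Finsupp.single b 1) (Finsupp.single b M) g, ← Finsupp.single_add]
        rw [h1, htype (p - 1) (1 + M)]
      have hres : C μ' a = C μ' b := by
        apply ih μ' (M + 1)
        · rw [hμ'def]
          rw [Multiset.mem_filter]
          constructor
          · rw [Nat.add_comm M 1]
            exact Multiset.mem_cons_of_mem (Multiset.mem_cons_self _ _)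
          · simp
        · intro x hx
          rw [hμ'def, Multiset.mem_filter] at hx
          rcases Multiset.mem_cons.mp hx.1 with rfl | hx'
          · omega
          · rcases Multiset.mem_cons.mp hx' with rfl | hx''
            · omega
            · have := hρmax x hx''; omega
        · intro x hx
          rw [hμ'def, Multiset.mem_filter] at hx
          simpa using hx.2
        · rw [hμ'def, multiset_sum_filter_ne_zero]
          simp only [Multiset.sum_cons]
          omega
        · omega
      rw [htypea, htypeb] at hstep
      have : C μ a - C μ b = 0 := by rw [hstep, hres, sub_self]
      linear_combination this

lemma wt_single (i : Fin n) (v : ℕ) : wt n (Finsupp.single i v) = v := by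
  unfold wt
  rw [Finsupp.sum_single_index rfl]

lemma multiset_exists_max (μ : Multiset ℕ) (h : μ ≠ 0) : ∃ M ∈ μ, ∀ x ∈ μ, x ≤ M := by
  induction μ using Multiset.induction with
  | empty => simp at h
  | cons y s ih =>
    by_cases hs : s = 0
    · subst hs
      refine ⟨y, Multiset.mem_cons_self _ _, ?_⟩
      intro x hx
      rcases Multiset.mem_cons.mp hx with rfl | hx
      · exact le_refl x
      · simp at hx
    · obtain ⟨M, hM, hmax⟩ := ih hs
      refine ⟨max y M, ?_, ?_⟩
      · rcases max_choice y M with h' | h'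
        · rw [h']; exact Multiset.mem_cons_self _ _
        · rw [h']; exact Multiset.mem_cons_of_mem hM
      · intro x hx
        rcases Multiset.mem_cons.mp hx with rfl | hx
        · exact le_max_left _ _
        · exact le_trans (hmax x hx) (le_max_right _ _)

lemma homog_one_eq (g : MvPolynomial (Fin n) k) (hg : g ∈ homogeneousSubmodule (Fin n) k 1)
    (c : k) (hc : ∀ i, coeff (Finsupp.single i 1) g = c) :
    g = c • ∑ i : Fin n, X i := by
  ext m
  rw [MvPolynomial.coeff_smul, MvPolynomial.coeff_sum, Finset.smul_sum]
  have hterm : ∀ i : Fin n, c • coeff m (X i) = if Finsupp.single i 1 = m then c else 0 := by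
    intro i
    rw [smul_eq_mul, MvPolynomial.coeff_X']
    by_cases h : Finsupp.single i 1 = m <;> simp [h]
  rw [Finset.sum_congr rfl (fun i _ => hterm i)]
  by_cases hm : ∃ j, Finsupp.single j 1 = m
  · obtain ⟨j, rfl⟩ := hm
    have : ∀ i : Fin n, (if (Finsupp.single i 1 : Fin n →₀ ℕ) = Finsupp.single j 1 then c else 0)
        = if i = j then c else 0 := by
      intro i
      by_cases h : i = j
      · subst h; simp
      · rw [if_neg h, if_neg (fun hh => h (Finsupp.single_left_injective one_ne_zero hh))]
    rw [Finset.sum_congr rfl (fun i _ => this i), Finset.sum_ite_eq' Finset.univ j (fun _ => c)]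
    simp [hc j]
  · push_neg at hm
    rw [Finset.sum_eq_zero (fun i _ => if_neg (hm i))]
    by_contra hne
    have hco : coeff m g ≠ 0 := fun h => hne (by rw [h])
    have hdeg : (Finsupp.weight 1) m = 1 := hg hco
    have hsum : (m.sum fun _ e => e) = 1 := by
      rw [← hdeg, Finsupp.weight_apply]
      simp [Finsupp.sum]
    obtain ⟨j, hj⟩ := degree_one_single n m hsum
    exact hm j hj.symm

/-- Proposition `prop:alternatesymmetry`: every linear relation on the monomial symmetric
polynomials `m_λ`, `λ ⊢ d`, `λ ≠ (d)`, has all components scalar multiples of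
`x_1 + ⋯ + x_n`; in particular the space `L_W` of linear relations is a trivial
`S_n`-representation. -/
theorem stmt14 (d : ℕ) (hd : 1 ≤ d) (hnd : d ≤ n)
    (ℓ : {lam : Nat.Partition d // lam.parts ≠ {d}} → MvPolynomial (Fin n) k)
    (hlin : ∀ p, ℓ p ∈ homogeneousSubmodule (Fin n) k 1)
    (hrel : ∑ p : {lam : Nat.Partition d // lam.parts ≠ {d}},
      contract k n (ℓ p) (msym k n d p.1.parts) = 0) :
    ∀ p, ∃ c : k, ℓ p = c • ∑ i : Fin n, X i := by
  classical
  intro p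
  have hn1 : 1 ≤ n := le_trans hd hnd
  set c : {lam : Nat.Partition d // lam.parts ≠ {d}} → Fin n → k :=
    fun q i => coeff (Finsupp.single i 1) (ℓ q) with hc
  set C : Multiset ℕ → Fin n → k :=
    fun μ i => ∑ q : {lam : Nat.Partition d // lam.parts ≠ {d}},
      if q.1.parts = μ then c q i else 0 with hC
  have hC0 : ∀ i, C {d} i = 0 := by
    intro i
    rw [hC]
    exact Finset.sum_eq_zero (fun q _ => if_neg q.2)
  have hCq : ∀ (q : {lam : Nat.Partition d // lam.parts ≠ {d}}) (i : Fin n),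
      C q.1.parts i = c q i := by
    intro q i
    rw [hC]
    beta_reduce
    have hcond : ∀ r : {lam : Nat.Partition d // lam.parts ≠ {d}},
        (if r.1.parts = q.1.parts then c r i else 0) = if r = q then c r i else 0 := by
      intro r
      by_cases h : r = q
      · subst h; simp
      · rw [if_neg h, if_neg (fun hparts => h (Subtype.ext (Nat.Partition.ext hparts)))]
    rw [Finset.sum_congr rfl (fun r _ => hcond r),
      Finset.sum_ite_eq' Finset.univ q (fun r => c r i)]
    simp
  have heq : ∀ f : Fin n →₀ ℕ, wt n f = d - 1 →
      ∑ i, C (typeOf n (Finsupp.single i 1 + f)) i = 0 := by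
    intro f hf
    have h0 : coeff f (∑ q : {lam : Nat.Partition d // lam.parts ≠ {d}},
        contract k n (ℓ q) (msym k n d q.1.parts)) = 0 := by
      rw [hrel]; simp
    rw [MvPolynomial.coeff_sum] at h0
    have h1 : ∀ q : {lam : Nat.Partition d // lam.parts ≠ {d}},
        coeff f (contract k n (ℓ q) (msym k n d q.1.parts))
          = ∑ i, c q i * (if typeOf n (Finsupp.single i 1 + f) = q.1.parts then 1 else 0) := by
      intro q
      rw [coeff_contract_homog k n (ℓ q) _ (hlin q) f]
      apply Finset.sum_congr rfl
      intro i _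
      rw [coeff_msym k n d q.1.parts _ (by rw [wt_add, wt_single]; omega)]
    rw [Finset.sum_congr rfl (fun q _ => h1 q), Finset.sum_comm] at h0
    rw [← h0]
    apply Finset.sum_congr rfl
    intro i _
    rw [hC]
    beta_reduce
    apply Finset.sum_congr rfl
    intro q _
    by_cases h : q.1.parts = typeOf n (Finsupp.single i 1 + f)
    · rw [if_pos h, if_pos h.symm, mul_one]
    · rw [if_neg h, if_neg (fun hh => h hh.symm), mul_zero]
  set a0 : Fin n := ⟨0, hn1⟩ with ha0
  refine ⟨c p a0, ?_⟩
  apply homog_one_eq k n (ℓ p) (hlin p)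
  intro i
  show c p i = c p a0
  by_cases hia : i = a0
  · rw [hia]
  · have hne : p.1.parts ≠ 0 := by
      intro h0
      have := p.1.parts_sum
      rw [h0] at this
      simp at this
      omega
    obtain ⟨M, hM, hMmax⟩ := multiset_exists_max p.1.parts hne
    have hcomb := combinat k n d hd hnd C hC0 heq i a0 hia d p.1.parts M hM hMmax
      (fun x hx => Nat.pos_iff_ne_zero.mp (p.1.parts_pos hx)) p.1.parts_sum
      (by omega)
    rw [hCq p i, hCq p a0] at hcomb
    exact hcomb

end PSI
end
end

section
/- Suppose char(k) = 0 and n ≥ d ≥ 2. Consider the linear system in variables c_λ (λ ⊢ d, λ ≠ (d)) given by: for each partition q ⊢ d−1 with q ≠ (d−1), the equation (n − #q)·c_{q↑(#q+1)} + Σ_{j=1}^{#q} c_{q↑j} = 0, and for q = (d−1) the equation (n−1−t_{(d-1,1)})·c_{(d-1,1)} − Σ_{λ ≠ (d),(d-1,1)} t_λ c_λ = 0, where t_λ are parameters. Then there is a nonempty Zariski-open set V ⊆ A^{P(d)−1} of parameter tuples (t_λ), containing the origin, on which the coefficient matrix of this system (of size P(d−1) × (P(d)−1)) has full rank P(d−1);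 hence for (t_λ) ∈ V, the solution space has dimension P(d) − P(d−1) − 1. -/
open MvPolynomial

noncomputable section
namespace PSI

open scoped Classical

variable (k : Type) [Field k] (n : ℕ)

/-- Extension of a vector indexed by partitions of `d` other than `(d)` to a function on
all multisets (zero away from such partitions). -/
def extc (d : ℕ) (c : {lam : Nat.Partition d // lam.parts ≠ {d}} → k)
    (m : Multiset ℕ) : k :=
  if h : ∃ p : {lam : Nat.Partition d // lam.parts ≠ {d}}, p.1.parts = m then c h.choose
  else 0

/-- The solution set of the linear system of Proposition `prop: general Aprime` in the
variables `c_λ` (`λ ⊢ d`, `λ ≠ (d)`), with parameters `t_λ`: for each `q ⊢ d−1`,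
`q ≠ (d−1)`, the equation `(n − #q)·c_{q↑(#q+1)} + Σ_{j=1}^{#q} c_{q↑j} = 0`, and for
`q = (d−1)` the equation `(n−1−t_{(d-1,1)})·c_{(d-1,1)} − Σ_{λ≠(d),(d-1,1)} t_λ c_λ = 0`. -/
def SolSet (d : ℕ) (t : {lam : Nat.Partition d // lam.parts ≠ {d}} → k) :
    Set ({lam : Nat.Partition d // lam.parts ≠ {d}} → k) :=
  {c | (∀ q : Nat.Partition (d - 1), q.parts ≠ {d - 1} →
      ((n - Multiset.card q.parts : ℕ) : k) * extc k d c (1 ::ₘ q.parts) +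
        (q.parts.map fun x => extc k d c ((x + 1) ::ₘ q.parts.erase x)).sum = 0) ∧
    ((n : k) - 1 - extc k d t ((d - 1) ::ₘ {1})) * extc k d c ((d - 1) ::ₘ {1}) -
      ∑ p : {lam : Nat.Partition d // lam.parts ≠ {d} ∧ lam.parts ≠ (d - 1) ::ₘ {1}},
        extc k d t p.1.parts * extc k d c p.1.parts = 0}

section Prop16

variable {d : ℕ}

/-- Abbreviation for the column index type: partitions of `d` other than `(d)`. -/
abbrev PI (d : ℕ) : Type := {lam : Nat.Partition d // lam.parts ≠ {d}}

lemma partition_eq_of_parts {m : ℕ} {q q' : Nat.Partition m} (h : q.parts = q'.parts) :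
    q = q' := Nat.Partition.ext h

lemma partition_card_le_sum {m : ℕ} (q : Nat.Partition m) : Multiset.card q.parts ≤ m := by
  have h := Multiset.card_nsmul_le_sum (s := q.parts) (a := 1) (fun x hx => q.parts_pos hx)
  simpa [q.parts_sum] using h

/-- The one-part partition `(d-1)` of `d-1`. -/
def pone (d : ℕ) (hd : 2 ≤ d) : Nat.Partition (d - 1) :=
  ⟨{d - 1}, fun hi => by rw [Multiset.mem_singleton] at hi; omega, Multiset.sum_singleton _⟩

lemma pone_parts (hd : 2 ≤ d) : (pone d hd).parts = {d - 1} := rfl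

/-- `q ↦ q ∪ {1}`, as a map from partitions of `d-1` to partitions of `d` (≠ `(d)`). -/
def colP (hd : 2 ≤ d) (q : Nat.Partition (d - 1)) : PI d :=
  ⟨⟨1 ::ₘ q.parts,
    fun hi => by
      rcases Multiset.mem_cons.mp hi with h | h
      · omega
      · exact q.parts_pos h,
    by rw [Multiset.sum_cons, q.parts_sum]; omega⟩, by
    intro hcon
    have hcard := congrArg Multiset.card hcon
    simp only [Multiset.card_cons, Multiset.card_singleton, Nat.add_right_cancel_iff] at hcard
    have h0 : q.parts = 0 := Multiset.card_eq_zero.mp (by omega)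
    have hs := q.parts_sum
    rw [h0, Multiset.sum_zero] at hs
    omega⟩

lemma colP_parts (hd : 2 ≤ d) (q : Nat.Partition (d - 1)) :
    (colP hd q).1.parts = 1 ::ₘ q.parts := rfl

lemma colP_injective (hd : 2 ≤ d) {q q' : Nat.Partition (d - 1)}
    (h : colP hd q = colP hd q') : q = q' := by
  apply partition_eq_of_parts
  have := congrArg (fun p : PI d => p.1.parts) h
  simpa only [colP_parts, Multiset.cons_inj_right] using this

lemma swap11 (d : ℕ) : ((d - 1) ::ₘ {1} : Multiset ℕ) = 1 ::ₘ {d - 1} := by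
  rw [← Multiset.cons_zero (1 : ℕ), Multiset.cons_swap, Multiset.cons_zero]

end Prop16

lemma extc_parts (d : ℕ) (c : PI d → k) (p : PI d) : extc k d c p.1.parts = c p := by
  unfold extc
  rw [dif_pos ⟨p, rfl⟩]
  congr 1
  exact Subtype.ext (Nat.Partition.ext
    (Exists.choose_spec (⟨p, rfl⟩ : ∃ p' : PI d, p'.1.parts = p.1.parts)))

lemma extc_single (d : ℕ) (p : PI d) (a : k) (m : Multiset ℕ) :
    extc k d (Pi.single p a) m = if m = p.1.parts then a else 0 := by
  unfold extc
  by_cases hm : ∃ p' : PI d, p'.1.parts = m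
  · rw [dif_pos hm]
    by_cases he : m = p.1.parts
    · have hc : hm.choose = p := Subtype.ext (Nat.Partition.ext (hm.choose_spec.trans he))
      rw [hc, if_pos he, Pi.single_eq_same]
    · rw [if_neg he]
      have hne : hm.choose ≠ p := fun hc => he (by rw [← hm.choose_spec, hc])
      exact Pi.single_eq_of_ne (M := fun _ => k) hne a
  · rw [dif_neg hm, if_neg (fun he => hm ⟨p, he.symm⟩)]

lemma extc_add (d : ℕ) (c c' : PI d → k) (m : Multiset ℕ) :
    extc k d (c + c') m = extc k d c m + extc k d c' m := by
  unfold extc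
  by_cases hm : ∃ p : PI d, p.1.parts = m
  · rw [dif_pos hm, dif_pos hm, dif_pos hm]; rfl
  · rw [dif_neg hm, dif_neg hm, dif_neg hm, add_zero]

lemma extc_smul (d : ℕ) (a : k) (c : PI d → k) (m : Multiset ℕ) :
    extc k d (a • c) m = a * extc k d c m := by
  unfold extc
  by_cases hm : ∃ p : PI d, p.1.parts = m
  · rw [dif_pos hm, dif_pos hm]; rfl
  · rw [dif_neg hm, dif_neg hm, mul_zero]

/-- The row functional of the linear system, for an arbitrary row `q ⊢ d-1`. -/
def rowFun (d : ℕ) (t c : PI d → k) (q : Nat.Partition (d - 1)) : k :=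
  if q.parts = {d - 1} then
    ((n : k) - 1 - extc k d t ((d - 1) ::ₘ {1})) * extc k d c ((d - 1) ::ₘ {1}) -
      ∑ p : {lam : Nat.Partition d // lam.parts ≠ {d} ∧ lam.parts ≠ (d - 1) ::ₘ {1}},
        extc k d t p.1.parts * extc k d c p.1.parts
  else
    ((n - Multiset.card q.parts : ℕ) : k) * extc k d c (1 ::ₘ q.parts) +
      (q.parts.map fun x => extc k d c ((x + 1) ::ₘ q.parts.erase x)).sum

/-- The coefficient matrix, as a linear map in `c`. -/
def Amap (d : ℕ) (t : PI d → k) : (PI d → k) →ₗ[k] (Nat.Partition (d - 1) → k) where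
  toFun c q := rowFun k n d t c q
  map_add' c c' := by
    funext q
    simp only [rowFun, Pi.add_apply]
    split_ifs with hq
    · simp only [extc_add, mul_add, Finset.sum_add_distrib]
      ring
    · simp only [extc_add, mul_add]
      rw [Multiset.sum_map_add]
      ring
  map_smul' a c := by
    funext q
    simp only [rowFun, RingHom.id_apply, Pi.smul_apply, smul_eq_mul]
    split_ifs with hq
    · simp only [extc_smul]
      have hs : ∑ p : {lam : Nat.Partition d // lam.parts ≠ {d} ∧
            lam.parts ≠ (d - 1) ::ₘ {1}},
          extc k d t p.1.parts * (a * extc k d c p.1.parts) =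
          a * ∑ p : {lam : Nat.Partition d // lam.parts ≠ {d} ∧
            lam.parts ≠ (d - 1) ::ₘ {1}},
          extc k d t p.1.parts * extc k d c p.1.parts := by
        rw [Finset.mul_sum]
        exact Finset.sum_congr rfl fun p _ => by ring
      rw [hs]
      ring
    · simp only [extc_smul]
      rw [Multiset.sum_map_mul_left]
      ring

lemma solset_eq (d : ℕ) (hd : 2 ≤ d) (t : PI d → k) :
    SolSet k n d t = {c | ∀ q, rowFun k n d t c q = 0} := by
  ext c
  constructor
  · rintro ⟨h1, h2⟩ q
    simp only [rowFun]
    split_ifs with hq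
    · exact h2
    · exact h1 q hq
  · intro H
    refine ⟨fun q hq => ?_, ?_⟩
    · have h := H q
      simp only [rowFun, if_neg hq] at h
      exact h
    · have h := H (pone d hd)
      simp only [rowFun, pone_parts, if_pos rfl] at h
      exact h

/-- Entry of the coefficient submatrix for a non-special row. -/
def rowval (d : ℕ) (q q' : Nat.Partition (d - 1)) : k :=
  ((n - Multiset.card q.parts : ℕ) : k) * (if q' = q then 1 else 0) +
    (q.parts.map fun x =>
      if ((x + 1) ::ₘ q.parts.erase x) = 1 ::ₘ q'.parts then (1 : k) else 0).sum

/-- The square submatrix (with polynomial entries in the parameters `t`) of the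
coefficient matrix, on the columns `q' ∪ {1}`. -/
def Mp (d : ℕ) (hd : 2 ≤ d) :
    Matrix (Nat.Partition (d - 1)) (Nat.Partition (d - 1)) (MvPolynomial (PI d) k) :=
  Matrix.of fun q q' =>
    if q.parts = {d - 1} then
      (if q' = pone d hd then C ((n : k) - 1) - X (colP hd (pone d hd))
       else - X (colP hd q'))
    else C (rowval k n d q q')

lemma eval_Mp (d : ℕ) (hd : 2 ≤ d) (t : PI d → k) (q q' : Nat.Partition (d - 1)) :
    eval t (Mp k n d hd q q') = rowFun k n d t (Pi.single (colP hd q') 1) q := by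
  by_cases hq : q.parts = {d - 1}
  · simp only [Mp, Matrix.of_apply, rowFun, if_pos hq]
    have htau : extc k d t ((d - 1) ::ₘ {1}) = t (colP hd (pone d hd)) := by
      rw [swap11]
      exact extc_parts k d t (colP hd (pone d hd))
    by_cases hq' : q' = pone d hd
    · subst hq'
      rw [if_pos rfl]
      have hsingle : extc k d (Pi.single (colP hd (pone d hd)) (1 : k))
          ((d - 1) ::ₘ {1}) = 1 := by
        rw [swap11, extc_single,
          if_pos (show (1 ::ₘ {d - 1} : Multiset ℕ) = (colP hd (pone d hd)).1.parts from rfl)]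
      have hsum : ∑ p : {lam : Nat.Partition d // lam.parts ≠ {d} ∧
            lam.parts ≠ (d - 1) ::ₘ {1}},
          extc k d t p.1.parts *
            extc k d (Pi.single (colP hd (pone d hd)) (1 : k)) p.1.parts = 0 := by
        refine Finset.sum_eq_zero fun p _ => ?_
        rw [extc_single, if_neg, mul_zero]
        intro hcon
        exact p.2.2 (hcon.trans
          (show ((colP hd (pone d hd)).1.parts : Multiset ℕ) = (d - 1) ::ₘ {1} from
            (swap11 d).symm))
      rw [htau, hsingle, hsum]
      simp only [eval_sub, eval_C, eval_X, sub_zero, mul_one]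
    · rw [if_neg hq']
      have hne2 : (colP hd q').1.parts ≠ (d - 1) ::ₘ {1} := by
        rw [swap11, colP_parts]
        intro hcon
        exact hq' (partition_eq_of_parts
          (((Multiset.cons_inj_right 1).mp hcon).trans (pone_parts hd).symm))
      have hsingle0 : extc k d (Pi.single (colP hd q') (1 : k)) ((d - 1) ::ₘ {1}) = 0 := by
        rw [extc_single, if_neg]
        intro hcon
        exact hne2 hcon.symm
      have hsum : ∑ p : {lam : Nat.Partition d // lam.parts ≠ {d} ∧
            lam.parts ≠ (d - 1) ::ₘ {1}},
          extc k d t p.1.parts *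
            extc k d (Pi.single (colP hd q') (1 : k)) p.1.parts = t (colP hd q') := by
        rw [Finset.sum_eq_single (⟨(colP hd q').1, (colP hd q').2, hne2⟩ :
          {lam : Nat.Partition d // lam.parts ≠ {d} ∧ lam.parts ≠ (d - 1) ::ₘ {1}})]
        · rw [extc_single, if_pos rfl, mul_one]
          exact extc_parts k d t (colP hd q')
        · intro p _ hpne
          rw [extc_single, if_neg, mul_zero]
          intro hcon
          exact hpne (Subtype.ext (Nat.Partition.ext hcon))
        · intro hmem
          exact absurd (Finset.mem_univ _) hmem
      rw [htau, hsingle0, hsum]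
      simp only [eval_neg, eval_X, mul_zero, zero_sub]
  · simp only [Mp, Matrix.of_apply, rowFun, if_neg hq, eval_C, rowval]
    have e1 : extc k d (Pi.single (colP hd q') (1 : k)) (1 ::ₘ q.parts) =
        if q' = q then (1 : k) else 0 := by
      rw [extc_single]
      by_cases h : q' = q
      · rw [if_pos (by rw [h]; rfl), if_pos h]
      · rw [if_neg h, if_neg]
        intro hcon
        rw [colP_parts] at hcon
        exact h (partition_eq_of_parts ((Multiset.cons_inj_right 1).mp hcon).symm)
    have e3 : (q.parts.map fun x =>
          extc k d (Pi.single (colP hd q') (1 : k)) ((x + 1) ::ₘ q.parts.erase x)) =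
        q.parts.map fun x =>
          if ((x + 1) ::ₘ q.parts.erase x) = 1 ::ₘ q'.parts then (1 : k) else 0 := by
      refine Multiset.map_congr rfl fun x _ => ?_
      rw [extc_single, colP_parts]
    rw [e1, e3]

lemma Amap_sum_single (d : ℕ) (hd : 2 ≤ d) (t : PI d → k)
    (w : Nat.Partition (d - 1) → k) (q : Nat.Partition (d - 1)) :
    Amap k n d t (∑ q' : Nat.Partition (d - 1),
      w q' • (Pi.single (colP hd q') 1 : PI d → k)) q =
      ∑ q' : Nat.Partition (d - 1), ((Mp k n d hd).map (eval t)) q q' * w q' := by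
  rw [map_sum, Finset.sum_apply]
  refine Finset.sum_congr rfl fun q' _ => ?_
  rw [map_smul, Pi.smul_apply, smul_eq_mul, Matrix.map_apply, mul_comm]
  congr 1
  exact (eval_Mp k n d hd t q q').symm

lemma eval_det_Mp (d : ℕ) (hd : 2 ≤ d) (t : PI d → k) :
    eval t (Mp k n d hd).det = ((Mp k n d hd).map (eval t)).det := by
  rw [RingHom.map_det, RingHom.mapMatrix_apply]

/-- Proposition `prop: general Aprime`: for `char k = 0` and `n ≥ d ≥ 2`, there is a
nonempty Zariski-open subset `V ⊆ A^{P(d)−1}` of parameter tuples `(t_λ)`, containing the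
origin, on which the solution space of the linear system has dimension
`P(d) − P(d−1) − 1` (equivalently, the `P(d−1) × (P(d)−1)` coefficient matrix has full
rank `P(d−1)`). -/
theorem stmt16 [CharZero k] (d : ℕ) (hd : 2 ≤ d) (hnd : d ≤ n) :
    ∃ h : MvPolynomial {lam : Nat.Partition d // lam.parts ≠ {d}} k, h ≠ 0 ∧
      eval (fun _ => (0 : k)) h ≠ 0 ∧
      ∀ t : {lam : Nat.Partition d // lam.parts ≠ {d}} → k, eval t h ≠ 0 →
        Module.finrank k ↥(Submodule.span k (SolSet k n d t)) + Pnum (d - 1) + 1 =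
          Pnum d := by
  classical
  have hdet0 : ((Mp k n d hd).map (eval fun _ => (0 : k))).det ≠ 0 := by
    intro hdet
    obtain ⟨v, hv, hmul⟩ := Matrix.exists_mulVec_eq_zero_iff.mpr hdet
    have hex : ∃ q, v q ≠ 0 := by
      by_contra hcon
      push_neg at hcon
      exact hv (funext hcon)
    obtain ⟨q0, hq0⟩ := hex
    obtain ⟨q, hqmem, hqmin⟩ := Finset.exists_min_image
      (Finset.univ.filter fun q => v q ≠ 0) (fun q => Multiset.card q.parts)
      ⟨q0, Finset.mem_filter.mpr ⟨Finset.mem_univ _, hq0⟩⟩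
    have hq : v q ≠ 0 := (Finset.mem_filter.mp hqmem).2
    have h0 : ∑ q', ((Mp k n d hd).map (eval fun _ => (0 : k))) q q' * v q' = 0 := by
      have h := congrFun hmul q
      simpa [Matrix.mulVec, dotProduct] using h
    have hsum : ∑ q', ((Mp k n d hd).map (eval fun _ => (0 : k))) q q' * v q' =
        ((Mp k n d hd).map (eval fun _ => (0 : k))) q q * v q := by
      refine Finset.sum_eq_single q ?_ ?_
      · intro q' _ hne
        by_cases hv' : v q' = 0
        · rw [hv', mul_zero]
        · have hle : Multiset.card q.parts ≤ Multiset.card q'.parts :=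
            hqmin q' (Finset.mem_filter.mpr ⟨Finset.mem_univ _, hv'⟩)
          have hz : ((Mp k n d hd).map (eval fun _ => (0 : k))) q q' = 0 := by
            rw [Matrix.map_apply]
            simp only [Mp, Matrix.of_apply]
            split_ifs with hspec hqp
            · have hqpone : q = pone d hd :=
                partition_eq_of_parts (by rw [hspec]; rfl)
              exact absurd (hqp.trans hqpone.symm) hne
            · simp
            · rw [eval_C]
              simp only [rowval, if_neg hne, mul_zero, zero_add]
              refine Multiset.sum_eq_zero fun y hy => ?_
              obtain ⟨x, hx, rfl⟩ := Multiset.mem_map.mp hy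
              rw [if_neg]
              intro hcon
              have hcard := congrArg Multiset.card hcon
              rw [Multiset.card_cons, Multiset.card_cons,
                Multiset.card_erase_of_mem hx, Nat.pred_eq_sub_one] at hcard
              have hpos : 0 < Multiset.card q.parts :=
                Multiset.card_pos_iff_exists_mem.mpr ⟨x, hx⟩
              omega
          rw [hz, zero_mul]
      · intro hmem
        exact absurd (Finset.mem_univ q) hmem
    rw [hsum] at h0
    have hqq : ((Mp k n d hd).map (eval fun _ => (0 : k))) q q ≠ 0 := by
      rw [Matrix.map_apply]
      simp only [Mp, Matrix.of_apply]
      split_ifs with hspec hqp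
      · simp only [map_sub, eval_C, eval_X, sub_zero]
        rw [show ((n : k) - 1) = ((n - 1 : ℕ) : k) by
          rw [Nat.cast_sub (show 1 ≤ n by omega), Nat.cast_one]]
        have hnz : n - 1 ≠ 0 := by omega
        exact_mod_cast hnz
      · exact absurd (partition_eq_of_parts (by rw [hspec]; rfl)) hqp
      · rw [eval_C]
        simp only [rowval, if_true, mul_one]
        have hz : (q.parts.map fun x =>
            if ((x + 1) ::ₘ q.parts.erase x) = 1 ::ₘ q.parts then (1 : k) else 0).sum = 0 := by
          refine Multiset.sum_eq_zero fun y hy => ?_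
          obtain ⟨x, hx, rfl⟩ := Multiset.mem_map.mp hy
          rw [if_neg]
          intro hcon
          have hcard := congrArg Multiset.card hcon
          rw [Multiset.card_cons, Multiset.card_cons,
            Multiset.card_erase_of_mem hx, Nat.pred_eq_sub_one] at hcard
          have hpos : 0 < Multiset.card q.parts :=
            Multiset.card_pos_iff_exists_mem.mpr ⟨x, hx⟩
          omega
        rw [hz, add_zero]
        have hcle : Multiset.card q.parts ≤ d - 1 := partition_card_le_sum q
        have hnz : n - Multiset.card q.parts ≠ 0 := by omega
        exact_mod_cast hnz
    exact hqq ((mul_eq_zero.mp h0).resolve_right hq)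
  refine ⟨(Mp k n d hd).det, ?_, ?_, ?_⟩
  · intro hzero
    apply hdet0
    rw [← eval_det_Mp k n d hd, hzero, map_zero]
  · rw [eval_det_Mp k n d hd]
    exact hdet0
  · intro t ht
    have hMtdet : ((Mp k n d hd).map (eval t)).det ≠ 0 := by
      rwa [← eval_det_Mp k n d hd]
    have hker : Submodule.span k (SolSet k n d t) = LinearMap.ker (Amap k n d t) := by
      have hset : SolSet k n d t = ↑(LinearMap.ker (Amap k n d t)) := by
        rw [solset_eq k n d hd t]
        ext c
        constructor
        · intro hc
          exact LinearMap.mem_ker.mpr (funext hc)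
        · intro hc q
          exact congrFun (LinearMap.mem_ker.mp hc) q
      rw [hset, Submodule.span_eq]
    have hsurj : Function.Surjective (Amap k n d t) := by
      intro y
      refine ⟨∑ q' : Nat.Partition (d - 1),
        (((Mp k n d hd).map (eval t))⁻¹.mulVec y) q' • (Pi.single (colP hd q') 1 : PI d → k), ?_⟩
      funext q
      rw [Amap_sum_single k n d hd t _ q]
      have hmv : ∑ q', ((Mp k n d hd).map (eval t)) q q' *
          (((Mp k n d hd).map (eval t))⁻¹.mulVec y) q' =
          (((Mp k n d hd).map (eval t)).mulVec
            (((Mp k n d hd).map (eval t))⁻¹.mulVec y)) q := by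
        simp [Matrix.mulVec, dotProduct]
      rw [hmv, Matrix.mulVec_mulVec,
        Matrix.mul_nonsing_inv _ (isUnit_iff_ne_zero.mpr hMtdet), Matrix.one_mulVec]
    have hrn := LinearMap.finrank_range_add_finrank_ker (Amap k n d t)
    rw [LinearMap.range_eq_top.mpr hsurj, finrank_top,
      Module.finrank_fintype_fun_eq_card, Module.finrank_fintype_fun_eq_card] at hrn
    have hiff : ∀ lam : Nat.Partition d, lam.parts = {d} ↔ lam = Nat.Partition.indiscrete d := by
      intro lam
      constructor
      · intro h
        exact partition_eq_of_parts
          (h.trans (Nat.Partition.indiscrete_parts (by omega)).symm)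
      · rintro rfl
        exact Nat.Partition.indiscrete_parts (by omega)
    have hcard1 : Fintype.card {lam : Nat.Partition d // lam.parts = {d}} = 1 := by
      rw [Fintype.card_congr (Equiv.subtypeEquivRight hiff), Fintype.card_subtype_eq]
    have hcard2 : Fintype.card (PI d) =
        Fintype.card {lam : Nat.Partition d // ¬lam.parts = {d}} :=
      Fintype.card_congr (Equiv.subtypeEquivRight fun _ => Iff.rfl)
    have hcard3 := Fintype.card_subtype_compl (fun lam : Nat.Partition d => lam.parts = {d})
    have hpos : 1 ≤ Fintype.card (Nat.Partition d) := Fintype.card_pos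
    have hPd : Pnum d = Fintype.card (Nat.Partition d) := rfl
    have hPd1 : Pnum (d - 1) = Fintype.card (Nat.Partition (d - 1)) := rfl
    have h5 : Fintype.card (PI d) + 1 = Fintype.card (Nat.Partition d) := by
      rw [hcard2, hcard3, hcard1]
      omega
    rw [hker, hPd, hPd1, ← h5, ← hrn]
    ac_rfl


end PSI
end
end
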